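/- If M satisfies the base axioms, then for all x, y ∈ M with x > 0, y > 0 and V(x) ≤ V(y), one has V(x + y) ≥ V(x). -/

import Mathlib

/-- The base axioms for a Büchi-arithmetic-like structure `M` with distinguished
element `one` and function `V`, over the base `k`. -/
structure BuchiAxioms (k : ℕ) (M : Type*) [AddCancelCommMonoid M] [LinearOrder M]
    (one : M) (V : M → M) : Prop where
  transl : ∀ x y z : M, x ≤ y ↔ x + z ≤ y + z
  one_pos : (0 : M) < one
  discrete : ∀ x y : M, x < y → x + one ≤ y
  ord0 : ∀ x : M, 0 ≤ x
  ord1 : ∀ x y : M, x ≤ y ↔ ∃ z ≤ y, z + x = y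
  mod : ∀ x : M, ∃ a : ℕ, a < k ∧ ∃ z : M, x = a • one + k • z ∨ a • one = x + k • z
  v0 : V 0 = 0 ∧ V one = one
  v1 : (∀ x : M, V (k • x) = k • V x) ∧
    ∀ (d : M) (a : ℕ), (0 < d ∧ V d = d) → 1 ≤ a → a < k → V (a • d) = d
  v2 : ∀ x y : M, 0 < x → 0 < y → V x < V y → V (x + y) = V x
  v3 : ∀ x : M, 0 < x → ∃ y ≤ x, ∃ a : ℕ, 1 ≤ a ∧ a < k ∧
    x = y + a • V x ∧ (V x < V y ∨ y = 0)
  v4 : ∀ x : M, 0 < x → ∃ d : M, (0 < d ∧ V d = d) ∧ d ≤ x ∧ x < k • d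
  v5 : ∀ x : M, V (V x) = V x

/-- `(x)_d = a` : the digit of `x` at position `d` (a power of `k`) equals `a`. -/
def DigitEq {M : Type*} [AddCancelCommMonoid M] [LinearOrder M]
    (V : M → M) (x d : M) (a : ℕ) : Prop :=
  (0 < d ∧ V d = d) ∧ ∃ y < d, ∃ z ≤ x, x = y + a • d + z ∧ (z = 0 ∨ d < V z)

/-!
If `V x < V y`, axiom (V2) gives `V (x + y) = V x` directly. If `V x = V y` but
`e := V (x + y) < V x`, then (V2) lets us keep adding `x` and `y` without changing the
valuation, so `V (k • (x + y)) = e`; but (V1) gives `V (k • (x + y)) = k • e > e`.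
-/

namespace BuchiAxioms

variable {k : ℕ} {M : Type*} [AddCancelCommMonoid M] [LinearOrder M] {one : M} {V : M → M}

theorem isOrderedCancelAddMonoid (H : BuchiAxioms k M one V) : IsOrderedCancelAddMonoid M where
  add_le_add_left a b h c := (H.transl a b c).mp h
  le_of_add_le_add_left a b c h := by
    rw [add_comm a b, add_comm a c] at h
    exact (H.transl b c a).mpr h

theorem V_pos (H : BuchiAxioms k M one V) {x : M} (hx : 0 < x) : 0 < V x := by
  obtain ⟨y, -, a, -, -, hxy, hy⟩ := H.v3 x hx
  refine (H.ord0 (V x)).lt_of_ne fun hV => ?_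
  rw [← hV, smul_zero, add_zero] at hxy
  rcases hy with hlt | rfl
  · exact hlt.ne (congrArg V hxy)
  · exact hx.ne hxy.symm

theorem V_add_add_of_lt (H : BuchiAxioms k M one V) {s x y : M} (hs : 0 < s) (hx : 0 < x)
    (hy : 0 < y) (hsx : V s < V x) (hsy : V s < V y) : V (s + (x + y)) = V s := by
  have := H.isOrderedCancelAddMonoid
  have hsx' : V (s + x) = V s := H.v2 s x hs hx hsx
  rw [← add_assoc, H.v2 (s + x) y (add_pos_of_pos_of_nonneg hs (H.ord0 x)) hy (hsx' ▸ hsy),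
    hsx']

theorem V_succ_nsmul_add (H : BuchiAxioms k M one V) {x y : M} (hx : 0 < x) (hy : 0 < y)
    (hVx : V (x + y) < V x) (hVy : V (x + y) < V y) (n : ℕ) :
    V ((n + 1) • (x + y)) = V (x + y) := by
  have := H.isOrderedCancelAddMonoid
  have hxy : 0 < x + y := add_pos_of_pos_of_nonneg hx (H.ord0 y)
  induction n with
  | zero => rw [zero_add, one_nsmul]
  | succ n ih =>
    have hpos : 0 < (n + 1) • (x + y) := nsmul_pos hxy n.succ_ne_zero
    rw [succ_nsmul, H.V_add_add_of_lt hpos hx hy (ih ▸ hVx) (ih ▸ hVy), ih]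

end BuchiAxioms

theorem stmt8 (k : ℕ) (hk : 2 ≤ k) (M : Type*) [AddCancelCommMonoid M] [LinearOrder M]
    (one : M) (V : M → M) (H : BuchiAxioms k M one V) :
    ∀ x y : M, 0 < x → 0 < y → V x ≤ V y → V x ≤ V (x + y) := by
  have := H.isOrderedCancelAddMonoid
  intro x y hx hy hxy
  rcases hxy.lt_or_eq with hlt | heq
  · exact (H.v2 x y hx hy hlt).ge
  by_contra! hcon
  have hkV : V (k • (x + y)) = V (x + y) := by
    obtain ⟨n, rfl⟩ : ∃ n, k = n + 1 := ⟨k - 1, by omega⟩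
    exact H.V_succ_nsmul_add hx hy hcon (heq ▸ hcon) n
  have hepos : 0 < V (x + y) := H.V_pos (add_pos_of_pos_of_nonneg hx (H.ord0 y))
  have hgrow : 1 • V (x + y) < k • V (x + y) := nsmul_lt_nsmul_left hepos (by omega)
  rw [one_nsmul, ← H.v1.1, hkV] at hgrow
  exact hgrow.false
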